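/- For each d ≥ 1 there exist constants ε₀ > 0 and C > 0, depending only on d, such that: for all 0 < ε < ε₀ with ε|log ε| < 1/(100d), for every d×d real matrix A of the form A = I + εX with |X_{ik}| ≤ |log ε| for all i,k, and for every 1 ≤ k ≤ d, | log ‖c_k^⊥(A)‖ − log ‖c_k'(A)‖ | ≤ C (ε |log ε|)⁴. -/

import Mathlib

open MeasureTheory ProbabilityTheory Filter RealInnerProductSpace

instance matrixMeasurableSpace {d : ℕ} : MeasurableSpace (Matrix (Fin d) (Fin d) ℝ) :=
  inferInstanceAs (MeasurableSpace (Fin d → Fin d → ℝ))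

/-- The law of a `d × d` standard Gaussian matrix: all `d²` entries are
independent standard normal random variables. -/
noncomputable def stdGaussianMatrix (d : ℕ) : Measure (Matrix (Fin d) (Fin d) ℝ) :=
  (Measure.pi fun _ : Fin d × Fin d => gaussianReal 0 1).map
    fun f => Matrix.of fun i j => f (i, j)

/-- The `j`-th column (0-based) of a `d × d` matrix, as a vector of
`EuclideanSpace ℝ (Fin d)`; junk value `0` for `j ≥ d`. -/
noncomputable def col {d : ℕ} (A : Matrix (Fin d) (Fin d) ℝ) (j : ℕ) :
    EuclideanSpace ℝ (Fin d) :=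
  if h : j < d then (WithLp.equiv 2 (Fin d → ℝ)).symm (fun i => A i ⟨j, h⟩) else 0

/-- `cCol A k` is the `k`-th column of `A`, 1-based. -/
noncomputable def cCol {d : ℕ} (A : Matrix (Fin d) (Fin d) ℝ) (k : ℕ) :
    EuclideanSpace ℝ (Fin d) := col A (k - 1)

/-- `cPerp A k` is the `k`-th vector (1-based) of the non-normalized Gram–Schmidt
orthogonalization of the columns of `A`. -/
noncomputable def cPerp {d : ℕ} (A : Matrix (Fin d) (Fin d) ℝ) (k : ℕ) :
    EuclideanSpace ℝ (Fin d) :=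
  InnerProductSpace.gramSchmidt ℝ (col A) (k - 1)

/-- `cApprox A k = c_k'(A) = c_k(A) - ∑_{j<k} ⟨c_j(A), c_k(A)⟩ c_j(A)` (1-based `k`). -/
noncomputable def cApprox {d : ℕ} (A : Matrix (Fin d) (Fin d) ℝ) (k : ℕ) :
    EuclideanSpace ℝ (Fin d) :=
  col A (k - 1) - ∑ j ∈ Finset.range (k - 1), (inner ℝ (col A j) (col A (k - 1)) : ℝ) • col A j

/-- `sval A k` is the `k`-th largest singular value of `A` (1-based), i.e. the
`k`-th largest square root of an eigenvalue of `AᴴA = AᵀA`. -/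
noncomputable def sval {d : ℕ} (A : Matrix (Fin d) (Fin d) ℝ) (k : ℕ) : ℝ :=
  ((Finset.univ.val.map fun i =>
      Real.sqrt ((show (A.transpose * A).IsHermitian by
        simpa using Matrix.isHermitian_conjTranspose_mul_self A).eigenvalues i)).sort (· ≤ ·)).getD
    (d - k) 0

/-- `matProd A n = A_n * A_{n-1} * ⋯ * A_1`. -/
noncomputable def matProd {d : ℕ} (A : ℕ → Matrix (Fin d) (Fin d) ℝ) :
    ℕ → Matrix (Fin d) (Fin d) ℝ
  | 0 => 1
  | n + 1 => A (n + 1) * matProd A n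

/-- `negLog x = log⁻ x = max (0, -log x)`. -/
noncomputable def negLog (x : ℝ) : ℝ := max 0 (-Real.log x)

/-- `theta B j` is the distance from the `j`-th column (1-based) of `B` to the span of
the other columns. -/
noncomputable def theta {d : ℕ} (B : Matrix (Fin d) (Fin d) ℝ) (j : ℕ) : ℝ :=
  Metric.infDist (cCol B j)
    (Submodule.span ℝ {v | ∃ i, 1 ≤ i ∧ i ≤ d ∧ i ≠ j ∧ v = cCol B i} :
      Set (EuclideanSpace ℝ (Fin d)))

/-- `Theta B = min_{1 ≤ j ≤ d} theta B j`. -/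
noncomputable def Theta {d : ℕ} (B : Matrix (Fin d) (Fin d) ℝ) : ℝ :=
  ⨅ j : Fin d, theta B ((j : ℕ) + 1)



set_option maxHeartbeats 2000000
open InnerProductSpace
open Finset in
private lemma aux_gs_close {d : ℕ} (hd : 1 ≤ d) (f : ℕ → EuclideanSpace ℝ (Fin d)) (M : ℝ)
    (hM : 0 ≤ M) (hsmall : (6*d:ℝ)^d * M ≤ 1/100)
    (h1 : ∀ j < d, ‖f j‖ ≤ 1 + M) (h2 : ∀ j < d, 1 - M ≤ ‖f j‖)
    (h3 : ∀ i < d, ∀ j < d, i ≠ j → |⟪f i, f j⟫| ≤ 3*M) :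
    ∀ j < d, ‖gramSchmidt ℝ f j - f j‖ ≤ (6*d:ℝ)^j * M := by
  set K : ℝ := 6*d with hKdef
  have hK6 : (6:ℝ) ≤ K := by
    have : (1:ℝ) ≤ d := by exact_mod_cast hd
    rw [hKdef]; nlinarith
  have hK1 : (1:ℝ) ≤ K := by linarith
  have hKpow : ∀ i j : ℕ, i ≤ j → K^i ≤ K^j := fun i j h => pow_le_pow_right₀ hK1 h
  have hKiM : ∀ i ≤ d, K^i*M ≤ 1/100 := fun i hi =>
    le_trans (mul_le_mul_of_nonneg_right (hKpow i d hi) hM) hsmall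
  have hM100 : M ≤ 1/100 := by have := hKiM 0 (Nat.zero_le d); simpa using this
  intro j
  induction j using Nat.strong_induction_on with
  | _ j ih =>
    intro hj
    have hdef : gramSchmidt ℝ f j - f j =
        -∑ i ∈ Finset.Iio j, (⟪gramSchmidt ℝ f i, f j⟫ / (‖gramSchmidt ℝ f i‖:ℝ)^2) •
          gramSchmidt ℝ f i := by
      have h := gramSchmidt_def'' ℝ f j
      conv_lhs => rw [h]
      abel
    rw [hdef, norm_neg]
    have hterm : ∀ i ∈ Finset.Iio j,
        ‖(⟪gramSchmidt ℝ f i, f j⟫ / (‖gramSchmidt ℝ f i‖:ℝ)^2) • gramSchmidt ℝ f i‖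
          ≤ 6*(K^i*M) := by
      intro i hi
      rw [Finset.mem_Iio] at hi
      have hid : i < d := lt_trans hi hj
      set g := gramSchmidt ℝ f with hg
      have hgi : ‖g i - f i‖ ≤ K^i*M := ih i hi hid
      have hKiM' : K^i*M ≤ 1/100 := hKiM i (le_of_lt hid)
      have hKiM0 : 0 ≤ K^i*M := by positivity
      have habs : |‖g i‖ - ‖f i‖| ≤ ‖g i - f i‖ := abs_norm_sub_norm_le _ _
      rw [abs_le] at habs
      have hfl : 1 - 1/100 ≤ ‖f i‖ := by have := h2 i hid; linarith
      have hfu : ‖f i‖ ≤ 1 + 1/100 := by have := h1 i hid; linarith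
      have hgl : (9:ℝ)/10 ≤ ‖g i‖ := by linarith
      have hgu : ‖g i‖ ≤ (11:ℝ)/10 := by linarith
      have h1M : (1:ℝ)*M ≤ K^i*M := mul_le_mul_of_nonneg_right (one_le_pow₀ hK1) hM
      have e1 : ⟪g i - f i, f j⟫ = ⟪g i, f j⟫ - ⟪f i, f j⟫ := inner_sub_left _ _ _
      have e2 : |⟪g i - f i, f j⟫| ≤ ‖g i - f i‖*‖f j‖ := abs_real_inner_le_norm _ _
      have e3 : ‖g i - f i‖*‖f j‖ ≤ (K^i*M)*(1+1/100) := by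
        apply mul_le_mul hgi _ (norm_nonneg _) hKiM0
        have := h1 j hj; linarith
      have e4 : |⟪f i, f j⟫| ≤ 3*M := h3 i hid j hj (Nat.ne_of_lt hi)
      have hip : |⟪g i, f j⟫| ≤ 5*(K^i*M) := by
        have : |⟪g i, f j⟫| ≤ |⟪f i, f j⟫| + |⟪g i - f i, f j⟫| := by
          rw [e1] at e2 ⊢
          have := abs_sub_abs_le_abs_sub (⟪g i, f j⟫) (⟪f i, f j⟫)
          linarith [abs_sub (⟪g i, f j⟫) (⟪f i, f j⟫)]
        linarith [e2.trans e3]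
      have hgne : (0:ℝ) < ‖g i‖ := by linarith
      rw [norm_smul, Real.norm_eq_abs, abs_div, abs_of_nonneg (by positivity : (0:ℝ) ≤ ‖g i‖^2)]
      have heq : |⟪g i, f j⟫| / ‖g i‖^2 * ‖g i‖ = |⟪g i, f j⟫| / ‖g i‖ := by
        field_simp
      rw [heq, div_le_iff₀ hgne]
      nlinarith
    calc ‖∑ i ∈ Finset.Iio j, (⟪gramSchmidt ℝ f i, f j⟫ / (‖gramSchmidt ℝ f i‖:ℝ)^2) •
          gramSchmidt ℝ f i‖
        ≤ ∑ i ∈ Finset.Iio j, ‖(⟪gramSchmidt ℝ f i, f j⟫ / (‖gramSchmidt ℝ f i‖:ℝ)^2) •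
          gramSchmidt ℝ f i‖ := norm_sum_le _ _
      _ ≤ ∑ i ∈ Finset.Iio j, 6*(K^i*M) := Finset.sum_le_sum hterm
      _ ≤ K^j*M := by
          rcases Nat.eq_zero_or_pos j with rfl | hj1
          · simp; positivity
          · have hb : ∀ i ∈ Finset.Iio j, 6*(K^i*M) ≤ 6*(K^(j-1)*M) := by
              intro i hi
              rw [Finset.mem_Iio] at hi
              have : K^i ≤ K^(j-1) := hKpow i (j-1) (Nat.le_pred_of_lt hi)
              nlinarith
            have hcard := Finset.sum_le_card_nsmul _ _ _ hb
            rw [Nat.card_Iio, nsmul_eq_mul] at hcard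
            have hjd : (j:ℝ) ≤ d := by exact_mod_cast le_of_lt hj
            have hKj : K^j = K^(j-1)*K := by
              conv_lhs => rw [← Nat.succ_pred_eq_of_pos hj1]
              rw [pow_succ, Nat.pred_eq_sub_one]
            have h0 : (0:ℝ) ≤ K^(j-1)*M := by positivity
            rw [hKj]
            calc (∑ i ∈ Finset.Iio j, 6*(K^i*M)) ≤ (j:ℝ)*(6*(K^(j-1)*M)) := hcard
              _ ≤ (d:ℝ)*(6*(K^(j-1)*M)) := by nlinarith
              _ = K^(j-1)*K*M := by rw [hKdef]; ring

open Finset in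
private lemma aux_main_est {d : ℕ} (hd : 1 ≤ d) (f : ℕ → EuclideanSpace ℝ (Fin d)) (M : ℝ)
    (hM : 0 ≤ M) (hsmall : (6*d:ℝ)^d * M ≤ 1/100)
    (h1 : ∀ j < d, ‖f j‖ ≤ 1 + M) (h2 : ∀ j < d, 1 - M ≤ ‖f j‖)
    (h3 : ∀ i < d, ∀ j < d, i ≠ j → |⟪f i, f j⟫| ≤ 3*M) :
    ∀ n < d, |Real.log ‖gramSchmidt ℝ f n‖ -
        Real.log ‖f n - ∑ j ∈ Finset.range n, ⟪f j, f n⟫ • f j‖| ≤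
      (100*(d:ℝ)^2*(6*(d:ℝ))^(2*d))^2 * M^4 := by
  set K : ℝ := 6*d with hKdef
  set g := gramSchmidt ℝ f with hgdef
  have hd1 : (1:ℝ) ≤ d := by exact_mod_cast hd
  have hK6 : (6:ℝ) ≤ K := by rw [hKdef]; nlinarith
  have hK1 : (1:ℝ) ≤ K := by linarith
  have hKpow : ∀ i j : ℕ, i ≤ j → K^i ≤ K^j := fun i j h => pow_le_pow_right₀ hK1 h
  have hKiM : ∀ i ≤ d, K^i*M ≤ 1/100 := fun i hi =>
    le_trans (mul_le_mul_of_nonneg_right (hKpow i d hi) hM) hsmall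
  have hM100 : M ≤ 1/100 := by have := hKiM 0 (Nat.zero_le d); simpa using this
  have hA : ∀ j < d, ‖g j - f j‖ ≤ K^j * M := aux_gs_close hd f M hM hsmall h1 h2 h3
  have hdef : ∀ j, g j - f j =
      -∑ i ∈ Finset.Iio j, (⟪g i, f j⟫ / (‖g i‖:ℝ)^2) • g i := by
    intro j
    have h := gramSchmidt_def'' ℝ f j
    rw [hgdef]
    conv_lhs => rw [h]
    abel
  -- basic bounds
  have hgl : ∀ i < d, (9:ℝ)/10 ≤ ‖g i‖ := by
    intro i hi
    have habs : |‖g i‖ - ‖f i‖| ≤ ‖g i - f i‖ := abs_norm_sub_norm_le _ _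
    rw [abs_le] at habs
    have := (hA i hi).trans (hKiM i hi.le)
    have := h2 i hi
    linarith
  have hgu : ∀ i < d, ‖g i‖ ≤ (11:ℝ)/10 := by
    intro i hi
    have habs : |‖g i‖ - ‖f i‖| ≤ ‖g i - f i‖ := abs_norm_sub_norm_le _ _
    rw [abs_le] at habs
    have := (hA i hi).trans (hKiM i hi.le)
    have := h1 i hi
    linarith
  have hip : ∀ i < d, ∀ j < d, i ≠ j → |⟪g i, f j⟫| ≤ 5*(K^i*M) := by
    intro i hi j hj hij
    have hgi : ‖g i - f i‖ ≤ K^i*M := hA i hi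
    have hKiM0 : (0:ℝ) ≤ K^i*M := by positivity
    have h1M : (1:ℝ)*M ≤ K^i*M := mul_le_mul_of_nonneg_right (one_le_pow₀ hK1) hM
    have e1 : ⟪g i - f i, f j⟫ = ⟪g i, f j⟫ - ⟪f i, f j⟫ := inner_sub_left _ _ _
    have e2 : |⟪g i - f i, f j⟫| ≤ ‖g i - f i‖*‖f j‖ := abs_real_inner_le_norm _ _
    have e3 : ‖g i - f i‖*‖f j‖ ≤ (K^i*M)*(1+1/100) := by
      apply mul_le_mul hgi _ (norm_nonneg _) hKiM0
      have := h1 j hj; linarith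
    have e4 : |⟪f i, f j⟫| ≤ 3*M := h3 i hi j hj hij
    have e5 : |⟪g i, f j⟫| ≤ |⟪f i, f j⟫| + |⟪g i - f i, f j⟫| := by
      rw [e1]
      have := abs_add_le (⟪f i, f j⟫) (⟪g i, f j⟫ - ⟪f i, f j⟫)
      simpa using this
    linarith [e2.trans e3]
  have hmu : ∀ i < d, ∀ j < d, i ≠ j → |⟪g i, f j⟫/‖g i‖^2| ≤ 7*(K^i*M) := by
    intro i hi j hj hij
    have hgi := hgl i hi
    have h5 := hip i hi j hj hij
    have hKiM0 : (0:ℝ) ≤ K^i*M := by positivity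
    have h81 : (81:ℝ)/100 ≤ ‖g i‖^2 := by nlinarith
    rw [abs_div, abs_of_nonneg (by positivity : (0:ℝ) ≤ ‖g i‖^2),
      div_le_iff₀ (by nlinarith : (0:ℝ) < ‖g i‖^2)]
    nlinarith [mul_le_mul_of_nonneg_left h81 (by positivity : (0:ℝ) ≤ 7*(K^i*M))]
  -- second-order bound
  have hC : ∀ i < d, ∀ n < d, i < n → |⟪g i - f i, f n⟫| ≤ 35*(d:ℝ)*K^(2*d)*M^2 := by
    intro i hi n hn hin
    have e : ⟪g i - f i, f n⟫ =
        -∑ l ∈ Finset.Iio i, (⟪g l, f i⟫ / (‖g l‖:ℝ)^2) * ⟪g l, f n⟫ := by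
      rw [hdef i, inner_neg_left, sum_inner]
      congr 1; congr 1
      ext l
      rw [real_inner_smul_left]
    rw [e, abs_neg]
    have hterm : ∀ l ∈ Finset.Iio i,
        |(⟪g l, f i⟫ / (‖g l‖:ℝ)^2) * ⟪g l, f n⟫| ≤ 35*(K^(2*d)*M^2) := by
      intro l hl
      rw [Finset.mem_Iio] at hl
      have hld : l < d := lt_trans hl hi
      have e1 := hmu l hld i hi (Nat.ne_of_lt hl)
      have e2 := hip l hld n hn (Nat.ne_of_lt (lt_trans hl hin))
      rw [abs_mul]
      have hKl : K^l ≤ K^d := hKpow l d hld.le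
      have hKK : K^l*K^l ≤ K^(2*d) := by
        rw [two_mul, pow_add]
        have : (0:ℝ) < K^l := by positivity
        nlinarith
      have h0 : (0:ℝ) ≤ K^l := by positivity
      nlinarith [abs_nonneg (⟪g l, f i⟫ / (‖g l‖:ℝ)^2), abs_nonneg (⟪g l, f n⟫)]
    calc |∑ l ∈ Finset.Iio i, (⟪g l, f i⟫ / (‖g l‖:ℝ)^2) * ⟪g l, f n⟫|
        ≤ ∑ l ∈ Finset.Iio i, |(⟪g l, f i⟫ / (‖g l‖:ℝ)^2) * ⟪g l, f n⟫| :=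
          Finset.abs_sum_le_sum_abs _ _
      _ ≤ ∑ l ∈ Finset.Iio i, 35*(K^(2*d)*M^2) := Finset.sum_le_sum hterm
      _ ≤ 35*(d:ℝ)*K^(2*d)*M^2 := by
          rw [Finset.sum_const, Nat.card_Iio, nsmul_eq_mul]
          have : (i:ℝ) ≤ d := by exact_mod_cast hi.le
          have h0 : (0:ℝ) ≤ K^(2*d)*M^2 := by positivity
          nlinarith
  intro n hn
  set Cd : ℝ := 100*(d:ℝ)^2*K^(2*d) with hCd
  -- the difference vector
  set S : EuclideanSpace ℝ (Fin d) := f n - ∑ j ∈ Finset.range n, ⟪f j, f n⟫ • f j with hS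
  set δ : EuclideanSpace ℝ (Fin d) := S - g n with hδ
  have hδeq : δ = ∑ i ∈ Finset.Iio n,
      ((⟪g i, f n⟫/‖g i‖^2) • g i - ⟪f i, f n⟫ • f i) := by
    have hgn : g n = f n - ∑ i ∈ Finset.Iio n, (⟪g i, f n⟫ / (‖g i‖:ℝ)^2) • g i := by
      have := hdef n
      rw [sub_eq_iff_eq_add] at this
      rw [this]; abel
    rw [hδ, hS, hgn, Finset.sum_sub_distrib,
      show Finset.range n = Finset.Iio n from (Nat.Iio_eq_range n).symm]
    abel
  -- bound on each term of δ
  have hδterm : ∀ i ∈ Finset.Iio n,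
      ‖(⟪g i, f n⟫/‖g i‖^2) • g i - ⟪f i, f n⟫ • f i‖ ≤ 73*(d:ℝ)*K^(2*d)*M^2 := by
    intro i hi
    rw [Finset.mem_Iio] at hi
    have hid : i < d := lt_trans hi hn
    have hgi : ‖g i - f i‖ ≤ K^i*M := hA i hid
    have hglo := hgl i hid
    have hguo := hgu i hid
    have hKiM0 : (0:ℝ) ≤ K^i*M := by positivity
    have hKiM' : K^i*M ≤ 1/100 := hKiM i hid.le
    have hKi1 : (1:ℝ) ≤ K^i := one_le_pow₀ hK1
    have hKid : K^i ≤ K^d := hKpow i d hid.le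
    have hKK : K^i*K^i ≤ K^(2*d) := by
      rw [two_mul, pow_add]
      have : (0:ℝ) < K^i := by positivity
      nlinarith
    have hKd2 : (1:ℝ) ≤ K^(2*d) := one_le_pow₀ hK1
    -- |1 - ‖g i‖²| ≤ 5 K^i M
    have habs : |‖g i‖ - ‖f i‖| ≤ ‖g i - f i‖ := abs_norm_sub_norm_le _ _
    rw [abs_le] at habs
    have hfl := h2 i hid
    have hfu := h1 i hid
    have hsq : |1 - ‖g i‖^2| ≤ 5*(K^i*M) := by
      rw [abs_le]
      constructor <;> nlinarith
    -- |μ - λ|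
    have htpos : (0:ℝ) < ‖g i‖^2 := by nlinarith
    have hkey : ⟪g i, f n⟫/‖g i‖^2 - ⟪f i, f n⟫ =
        (⟪g i - f i, f n⟫ + ⟪f i, f n⟫*(1 - ‖g i‖^2))/‖g i‖^2 := by
      rw [inner_sub_left]
      field_simp
      ring
    have hCi := hC i hid n hn hi
    have hlam : |⟪f i, f n⟫| ≤ 3*M := h3 i hid n hn (Nat.ne_of_lt hi)
    have hnum : |⟪g i - f i, f n⟫ + ⟪f i, f n⟫*(1 - ‖g i‖^2)| ≤ 50*(d:ℝ)*K^(2*d)*M^2 := by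
      have e1 := abs_add_le (⟪g i - f i, f n⟫) (⟪f i, f n⟫*(1 - ‖g i‖^2))
      rw [abs_mul] at e1
      have h2' : |⟪f i, f n⟫| * |1 - ‖g i‖^2| ≤ (3*M)*(5*(K^i*M)) := by
        apply mul_le_mul hlam hsq (abs_nonneg _) (by linarith)
      have h3' : (3*M)*(5*(K^i*M)) ≤ 15*K^(2*d)*M^2 := by
        have hh := mul_le_mul_of_nonneg_right (hKpow i (2*d) (by omega))
          (mul_self_nonneg M)
        nlinarith [hh]
      have hd' : (1:ℝ)*(K^(2*d)*M^2) ≤ (d:ℝ)*(K^(2*d)*M^2) := by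
        apply mul_le_mul_of_nonneg_right hd1 (by positivity)
      linarith [e1, hCi, h2', h3', hd']
    have hmulam : |⟪g i, f n⟫/‖g i‖^2 - ⟪f i, f n⟫| ≤ 65*(d:ℝ)*K^(2*d)*M^2 := by
      rw [hkey, abs_div, abs_of_nonneg htpos.le, div_le_iff₀ htpos]
      have h81 : (81:ℝ)/100 ≤ ‖g i‖^2 := by nlinarith
      have h0 : (0:ℝ) ≤ 65*(d:ℝ)*K^(2*d)*M^2 := by positivity
      have hh := mul_le_mul_of_nonneg_left h81 h0
      linarith [hnum, hh]
    -- assemble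
    have hsplit : (⟪g i, f n⟫/‖g i‖^2) • g i - ⟪f i, f n⟫ • f i =
        (⟪g i, f n⟫/‖g i‖^2) • (g i - f i) +
          (⟪g i, f n⟫/‖g i‖^2 - ⟪f i, f n⟫) • f i := by
      rw [smul_sub, sub_smul]; abel
    rw [hsplit]
    have e1 : ‖(⟪g i, f n⟫/‖g i‖^2) • (g i - f i)‖ ≤ (7*(K^i*M))*(K^i*M) := by
      rw [norm_smul, Real.norm_eq_abs]
      exact mul_le_mul (hmu i hid n hn (Nat.ne_of_lt hi)) hgi (norm_nonneg _) (by positivity)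
    have e2 : ‖(⟪g i, f n⟫/‖g i‖^2 - ⟪f i, f n⟫) • f i‖ ≤ (65*(d:ℝ)*K^(2*d)*M^2)*(1+1/100) := by
      rw [norm_smul, Real.norm_eq_abs]
      apply mul_le_mul hmulam (by linarith) (norm_nonneg _) (by positivity)
    have htri := norm_add_le ((⟪g i, f n⟫/‖g i‖^2) • (g i - f i))
      ((⟪g i, f n⟫/‖g i‖^2 - ⟪f i, f n⟫) • f i)
    have hd' : (1:ℝ)*(K^(2*d)*M^2) ≤ (d:ℝ)*(K^(2*d)*M^2) := by
      apply mul_le_mul_of_nonneg_right hd1 (by positivity)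
    have hq1 : K^i*K^i*M^2 ≤ K^(2*d)*M^2 :=
      mul_le_mul_of_nonneg_right hKK (by positivity)
    have e1' : (7*(K^i*M))*(K^i*M) ≤ 7*((d:ℝ)*(K^(2*d)*M^2)) := by nlinarith [hq1, hd']
    have hx0 : (0:ℝ) ≤ (d:ℝ)*(K^(2*d)*M^2) := by positivity
    have e2' : (65*(d:ℝ)*K^(2*d)*M^2)*(1+1/100) ≤ 66*((d:ℝ)*(K^(2*d)*M^2)) := by nlinarith [hx0]
    linarith [htri, e1, e2, e1', e2']
  have hδnorm : ‖δ‖ ≤ Cd*M^2 := by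
    rw [hδeq]
    calc ‖∑ i ∈ Finset.Iio n, ((⟪g i, f n⟫/‖g i‖^2) • g i - ⟪f i, f n⟫ • f i)‖
        ≤ ∑ i ∈ Finset.Iio n, ‖(⟪g i, f n⟫/‖g i‖^2) • g i - ⟪f i, f n⟫ • f i‖ :=
          norm_sum_le _ _
      _ ≤ ∑ i ∈ Finset.Iio n, 73*(d:ℝ)*K^(2*d)*M^2 := Finset.sum_le_sum hδterm
      _ ≤ Cd*M^2 := by
          rw [Finset.sum_const, Nat.card_Iio, nsmul_eq_mul, hCd]
          have hnle : (n:ℝ) ≤ d := by exact_mod_cast hn.le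
          have hy : (0:ℝ) ≤ 73*(d:ℝ)*K^(2*d)*M^2 := by positivity
          have hmm := mul_le_mul_of_nonneg_right hnle hy
          have h00 : (0:ℝ) ≤ (d:ℝ)^2*(K^(2*d)*M^2) := by positivity
          nlinarith [hmm, h00]
  -- orthogonality
  have horth : ⟪g n, δ⟫ = 0 := by
    rw [hδeq, inner_sum]
    apply Finset.sum_eq_zero
    intro i hi
    rw [Finset.mem_Iio] at hi
    rw [inner_sub_right, real_inner_smul_right, real_inner_smul_right,
      gramSchmidt_orthogonal ℝ f (Nat.ne_of_gt hi),
      gramSchmidt_inv_triangular ℝ f hi]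
    ring
  -- Pythagoras
  have hSeq : S = g n + δ := by rw [hδ]; abel
  have hpyth : ‖S‖^2 = ‖g n‖^2 + ‖δ‖^2 := by
    rw [hSeq, norm_add_sq_real, horth]; ring
  -- final log estimate
  set a : ℝ := ‖g n‖ with ha
  set b : ℝ := ‖S‖ with hb
  have ha9 : (9:ℝ)/10 ≤ a := hgl n hn
  have hr0 : (0:ℝ) ≤ ‖δ‖ := norm_nonneg _
  have hb0 : (0:ℝ) ≤ b := norm_nonneg _
  have hab : a ≤ b := by
    apply le_of_pow_le_pow_left₀ two_ne_zero hb0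
    nlinarith
  have hapos : (0:ℝ) < a := by linarith
  have hbpos : (0:ℝ) < b := by linarith
  have hlog1 : Real.log a ≤ Real.log b := Real.log_le_log hapos hab
  have hba : b - a ≤ ‖δ‖^2*(5/9) := by nlinarith
  have hlog2 : Real.log b - Real.log a ≤ ‖δ‖^2 := by
    rw [← Real.log_div hbpos.ne' hapos.ne']
    have h1' : Real.log (b/a) ≤ b/a - 1 := Real.log_le_sub_one_of_pos (by positivity)
    have h2' : b/a - 1 = (b-a)/a := by field_simp
    have h3' : (b-a)/a ≤ ‖δ‖^2 := by
      rw [div_le_iff₀ hapos]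
      nlinarith
    linarith
  have hCd0 : (0:ℝ) ≤ Cd := by rw [hCd]; positivity
  calc |Real.log a - Real.log b| = Real.log b - Real.log a := by
        rw [abs_sub_comm, abs_of_nonneg (by linarith)]
    _ ≤ ‖δ‖^2 := hlog2
    _ ≤ (Cd*M^2)^2 := by nlinarith
    _ = Cd^2 * M^4 := by ring

theorem stmt15 {d : ℕ} (hd : 1 ≤ d) :
    ∃ ε₀ > 0, ∃ C > 0, ∀ ε : ℝ, 0 < ε → ε < ε₀ → ε * |Real.log ε| < 1 / (100 * d) →
      ∀ X : Matrix (Fin d) (Fin d) ℝ, (∀ i k, |X i k| ≤ |Real.log ε|) →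
        ∀ k, 1 ≤ k → k ≤ d →
          |Real.log ‖cPerp (1 + ε • X) k‖ - Real.log ‖cApprox (1 + ε • X) k‖| ≤
            C * (ε * |Real.log ε|) ^ 4 := by
  have hd1 : (1:ℝ) ≤ d := by exact_mod_cast hd
  have hdpos : (0:ℝ) < d := by linarith
  set T : ℝ := (6*(d:ℝ))^d*(d:ℝ) with hTdef
  have hT1 : (1:ℝ) ≤ T := by
    have h6d : (1:ℝ) ≤ 6*(d:ℝ) := by linarith
    have := one_le_pow₀ (n := d) h6d
    rw [hTdef]; nlinarith
  have hT0 : (0:ℝ) < T := by linarith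
  refine ⟨((200*T)⁻¹)^2, by positivity,
    (100*(d:ℝ)^2*(6*(d:ℝ))^(2*d))^2 * (d:ℝ)^4 + 1, by positivity, ?_⟩
  intro ε hε hε₀ _hεd X hX k hk1 hkd
  set L := |Real.log ε| with hLdef
  have hL0 : 0 ≤ L := abs_nonneg _
  set M : ℝ := (d:ℝ)*(ε*L) with hMdef
  have hM0 : 0 ≤ M := by positivity
  -- ε < 1
  have hinv1 : (200*T)⁻¹ ≤ 1 := by
    rw [inv_le_one_iff₀]; right; linarith
  have hinv0 : (0:ℝ) < (200*T)⁻¹ := by positivity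
  have hε1 : ε < 1 := by nlinarith
  -- √ε < (200 T)⁻¹
  have hsqrt : Real.sqrt ε < (200*T)⁻¹ := by
    have h := Real.sqrt_lt_sqrt hε.le hε₀
    rwa [Real.sqrt_sq hinv0.le] at h
  -- ε L ≤ 2 √ε
  have hs0 : 0 < Real.sqrt ε := Real.sqrt_pos.mpr hε
  have hεL2 : ε * L ≤ 2*Real.sqrt ε := by
    have hlogneg : Real.log ε ≤ 0 := Real.log_nonpos hε.le hε1.le
    have hLeq : L = -Real.log ε := abs_of_nonpos hlogneg
    have h1 : Real.log (1/Real.sqrt ε) ≤ 1/Real.sqrt ε - 1 :=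
      Real.log_le_sub_one_of_pos (by positivity)
    have h2 : Real.log (1/Real.sqrt ε) = -(Real.log ε)/2 := by
      rw [one_div, Real.log_inv, Real.log_sqrt hε.le]
      ring
    have h3 : -Real.log ε ≤ 2/Real.sqrt ε := by
      rw [h2] at h1
      have e1 : (2:ℝ)/Real.sqrt ε = 2*(1/Real.sqrt ε) := by ring
      rw [e1]
      linarith
    have h4 : ε*(-Real.log ε) ≤ ε*(2/Real.sqrt ε) :=
      mul_le_mul_of_nonneg_left h3 hε.le
    have h5 : ε*(2/Real.sqrt ε) = 2*(ε/Real.sqrt ε) := by ring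
    rw [Real.div_sqrt] at h5
    rw [hLeq]
    linarith
  -- smallness hypothesis
  have hsmall : (6*(d:ℝ))^d * M ≤ 1/100 := by
    have h1 : ε*L ≤ 2*((200*T)⁻¹) := by linarith
    have h2 : T*(ε*L) ≤ T*(2*((200*T)⁻¹)) := mul_le_mul_of_nonneg_left h1 hT0.le
    have h3 : T*(2*((200*T)⁻¹)) = 1/100 := by
      field_simp
      ring
    calc (6*(d:ℝ))^d * M = T*(ε*L) := by rw [hMdef, hTdef]; ring
      _ ≤ 1/100 := by rw [h3] at h2; exact h2
  have hM100 : M ≤ 1/100 := by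
    have h6d : (1:ℝ) ≤ 6*(d:ℝ) := by linarith
    have hp1 : (1:ℝ) ≤ (6*(d:ℝ))^d := one_le_pow₀ h6d
    nlinarith
  -- column estimates
  have hdiff : ∀ j (hj : j < d),
      ‖col (1 + ε • X) j - EuclideanSpace.single (⟨j, hj⟩ : Fin d) (1:ℝ)‖ ≤ M := by
    intro j hj
    have happ : ∀ i : Fin d,
        ((col (1 + ε • X) j - EuclideanSpace.single (⟨j, hj⟩ : Fin d) (1:ℝ) :
          EuclideanSpace ℝ (Fin d))) i = ε * X i ⟨j, hj⟩ := by
      intro i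
      have hc : (col (1 + ε • X) j : EuclideanSpace ℝ (Fin d)) i
          = (if i = (⟨j,hj⟩ : Fin d) then (1:ℝ) else 0) + ε * X i ⟨j,hj⟩ := by
        rw [col, dif_pos hj]
        simp [WithLp.equiv_symm_apply, PiLp.toLp_apply, Matrix.add_apply, Matrix.one_apply,
          Matrix.smul_apply]
      rw [PiLp.sub_apply, hc, EuclideanSpace.single_apply]
      ring
    rw [EuclideanSpace.norm_eq]
    simp_rw [happ, Real.norm_eq_abs]
    have hs : (∑ i : Fin d, |ε * X i ⟨j,hj⟩|^2) ≤ ((d:ℝ)*(ε*L))^2 := by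
      have hterm : ∀ i : Fin d, |ε * X i ⟨j,hj⟩|^2 ≤ (ε*L)^2 := by
        intro i
        have h1 : |ε * X i ⟨j,hj⟩| ≤ ε*L := by
          rw [abs_mul, abs_of_pos hε]
          exact mul_le_mul_of_nonneg_left (hX i _) hε.le
        exact pow_le_pow_left₀ (abs_nonneg _) h1 2
      calc (∑ i : Fin d, |ε * X i ⟨j,hj⟩|^2) ≤ ∑ _i : Fin d, (ε*L)^2 :=
            Finset.sum_le_sum (fun i _ => hterm i)
        _ = (d:ℝ)*(ε*L)^2 := by rw [Finset.sum_const, Finset.card_univ, Fintype.card_fin,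
            nsmul_eq_mul]
        _ ≤ ((d:ℝ)*(ε*L))^2 := by
            have h0 : (0:ℝ) ≤ (ε*L)^2 := by positivity
            nlinarith
    calc Real.sqrt (∑ i : Fin d, |ε * X i ⟨j,hj⟩|^2) ≤ Real.sqrt (((d:ℝ)*(ε*L))^2) :=
          Real.sqrt_le_sqrt hs
      _ = M := by rw [Real.sqrt_sq (by positivity), hMdef]
  have hsingle : ∀ j (hj : j < d),
      ‖EuclideanSpace.single (⟨j, hj⟩ : Fin d) (1:ℝ)‖ = 1 := by
    intro j hj
    rw [EuclideanSpace.norm_single, norm_one]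
  have h1 : ∀ j < d, ‖col (1 + ε • X) j‖ ≤ 1 + M := by
    intro j hj
    have h := hdiff j hj
    have habs := abs_norm_sub_norm_le (col (1 + ε • X) j)
      (EuclideanSpace.single (⟨j, hj⟩ : Fin d) (1:ℝ))
    rw [abs_le, hsingle j hj] at habs
    linarith [habs.2]
  have h2 : ∀ j < d, 1 - M ≤ ‖col (1 + ε • X) j‖ := by
    intro j hj
    have h := hdiff j hj
    have habs := abs_norm_sub_norm_le (col (1 + ε • X) j)
      (EuclideanSpace.single (⟨j, hj⟩ : Fin d) (1:ℝ))
    rw [abs_le, hsingle j hj] at habs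
    linarith [habs.1]
  have h3 : ∀ i < d, ∀ j < d, i ≠ j →
      |⟪col (1 + ε • X) i, col (1 + ε • X) j⟫| ≤ 3*M := by
    intro i hi j hj hij
    set si : EuclideanSpace ℝ (Fin d) := EuclideanSpace.single (⟨i, hi⟩ : Fin d) (1:ℝ)
      with hsi
    set sj : EuclideanSpace ℝ (Fin d) := EuclideanSpace.single (⟨j, hj⟩ : Fin d) (1:ℝ)
      with hsj
    set ui : EuclideanSpace ℝ (Fin d) := col (1 + ε • X) i - si with hui
    set uj : EuclideanSpace ℝ (Fin d) := col (1 + ε • X) j - sj with huj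
    have hii : col (1 + ε • X) i = si + ui := by rw [hui]; abel
    have hjj : col (1 + ε • X) j = sj + uj := by rw [huj]; abel
    have hss : ⟪si, sj⟫ = 0 := by
      rw [hsi, hsj]
      have hne : (⟨i, hi⟩ : Fin d) ≠ ⟨j, hj⟩ := by
        simp only [ne_eq, Fin.mk.injEq]; exact hij
      simp only [EuclideanSpace.inner_single_left, EuclideanSpace.single_apply,
        map_one, one_mul]
      rw [if_neg]
      simp only [Fin.mk.injEq]
      omega
    have hexp : ⟪col (1 + ε • X) i, col (1 + ε • X) j⟫
        = ⟪si, uj⟫ + (⟪ui, sj⟫ + ⟪ui, uj⟫) := by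
      rw [hii, hjj, inner_add_left, inner_add_right, inner_add_right, hss]
      ring
    have b1 : |⟪si, uj⟫| ≤ 1*M := by
      have := abs_real_inner_le_norm si uj
      have h1' : ‖si‖ = 1 := hsingle i hi
      have h2' : ‖uj‖ ≤ M := hdiff j hj
      calc |⟪si, uj⟫| ≤ ‖si‖*‖uj‖ := this
        _ ≤ 1*M := by rw [h1']; nlinarith [norm_nonneg uj]
    have b2 : |⟪ui, sj⟫| ≤ M*1 := by
      have := abs_real_inner_le_norm ui sj
      have h1' : ‖sj‖ = 1 := hsingle j hj
      have h2' : ‖ui‖ ≤ M := hdiff i hi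
      calc |⟪ui, sj⟫| ≤ ‖ui‖*‖sj‖ := this
        _ ≤ M*1 := by rw [h1']; nlinarith [norm_nonneg ui]
    have b3 : |⟪ui, uj⟫| ≤ M*M := by
      have := abs_real_inner_le_norm ui uj
      have h2' : ‖ui‖ ≤ M := hdiff i hi
      have h3' : ‖uj‖ ≤ M := hdiff j hj
      calc |⟪ui, uj⟫| ≤ ‖ui‖*‖uj‖ := this
        _ ≤ M*M := mul_le_mul h2' h3' (norm_nonneg _) hM0
    rw [hexp]
    have ha1 := abs_add_le (⟪si, uj⟫) (⟪ui, sj⟫ + ⟪ui, uj⟫)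
    have ha2 := abs_add_le (⟪ui, sj⟫) (⟪ui, uj⟫)
    nlinarith [ha1, ha2, b1, b2, b3]
  -- apply the main estimate
  have hn : k - 1 < d := by omega
  have key := aux_main_est hd (col (1 + ε • X)) M hM0 hsmall h1 h2 h3 (k-1) hn
  have hunfold1 : cPerp (1 + ε • X) k = gramSchmidt ℝ (col (1 + ε • X)) (k-1) := rfl
  have hunfold2 : cApprox (1 + ε • X) k = col (1 + ε • X) (k-1) -
      ∑ j ∈ Finset.range (k-1),
        ⟪col (1 + ε • X) j, col (1 + ε • X) (k-1)⟫ • col (1 + ε • X) j := rfl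
  rw [hunfold1, hunfold2]
  have hM4 : M^4 = (d:ℝ)^4*(ε*L)^4 := by rw [hMdef]; ring
  have hp0 : (0:ℝ) ≤ (ε*L)^4 := by positivity
  calc |Real.log ‖gramSchmidt ℝ (col (1 + ε • X)) (k-1)‖ -
        Real.log ‖col (1 + ε • X) (k-1) - ∑ j ∈ Finset.range (k-1),
          ⟪col (1 + ε • X) j, col (1 + ε • X) (k-1)⟫ • col (1 + ε • X) j‖|
      ≤ (100*(d:ℝ)^2*(6*(d:ℝ))^(2*d))^2 * M^4 := key
    _ = (100*(d:ℝ)^2*(6*(d:ℝ))^(2*d))^2 * (d:ℝ)^4 * (ε*L)^4 := by rw [hM4]; ring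
    _ ≤ ((100*(d:ℝ)^2*(6*(d:ℝ))^(2*d))^2 * (d:ℝ)^4 + 1) * (ε*L)^4 := by nlinarith [hp0]
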